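/- arXiv:1202.0618 — 2 statements merged into one kernel-verified Lean document; each statement's English description precedes it below -/
import Mathlib

section
/- For every real y and every natural number n, |H_n(y) e^{-y^2/2}| ≤ 2^{n/2} (2/(n! π)) Γ((n+1)/2). -/
open Real

/-- Hermite polynomial with normalization `H_n(x) = ((-1)^n / n!) e^{x²/2} (d/dx)^n e^{-x²/2}`. -/
noncomputable def hermiteH (n : ℕ) (x : ℝ) : ℝ :=
  ((-1 : ℝ) ^ n / n.factorial) * Real.exp (x ^ 2 / 2) *
    iteratedDeriv n (fun y : ℝ => Real.exp (-(y ^ 2) / 2)) x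

open Complex MeasureTheory FourierTransform

/-!
Up to the factor `√(2π)`, `e^{-x²/2}` is the Fourier transform of the Gaussian `e^{-2π²ξ²}`.
Differentiating under the Fourier integral, its `n`-th derivative is bounded by the absolute
moment `√(2π) (2π)ⁿ ∫ |ξ|ⁿ e^{-2π²ξ²} dξ = 2^{n/2} Γ((n+1)/2) / √π`, and `1/√π ≤ 2/π`.
-/

theorem norm_iteratedDeriv_fourier_le {E : Type*} [NormedAddCommGroup E] [NormedSpace ℂ E]
    {f : ℝ → E} {n : ℕ} (hf : ∀ k ≤ n, Integrable (fun x : ℝ ↦ x ^ k • f x)) (y : ℝ) :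
    ‖iteratedDeriv n (𝓕 f) y‖ ≤ (2 * π) ^ n * ∫ x, |x| ^ n * ‖f x‖ := by
  rw [iteratedDeriv_fourier (N := n) (fun k hk ↦ hf k (mod_cast hk)) le_rfl, ← integral_const_mul]
  refine (VectorFourier.norm_fourierIntegral_le_integral_norm _ _ _ _ _).trans_eq ?_
  congr 1 with x
  simp [norm_smul, abs_of_pos pi_pos, mul_pow, mul_assoc]

theorem norm_iteratedDeriv_ofReal_comp {f : ℝ → ℝ} {n : ℕ} {x : ℝ} (hf : ContDiffAt ℝ n f x) :
    ‖iteratedDeriv n (fun y ↦ (f y : ℂ)) x‖ = |iteratedDeriv n f x| := by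
  rw [← norm_iteratedFDeriv_eq_norm_iteratedDeriv, ← Real.norm_eq_abs,
    ← norm_iteratedFDeriv_eq_norm_iteratedDeriv]
  exact ofRealLI.norm_iteratedFDeriv_comp_left hf le_rfl

theorem integrable_pow_smul_cexp_neg_mul_sq {b : ℝ} (hb : 0 < b) (k : ℕ) :
    Integrable (fun x : ℝ ↦ x ^ k • cexp (-b * x ^ 2)) := by
  have h : Integrable (fun x : ℝ ↦ x ^ k * rexp (-b * x ^ 2)) := by
    simpa using integrable_rpow_mul_exp_neg_mul_sq hb (s := k)
      (by linarith [k.cast_nonneg (α := ℝ)])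
  convert h.ofReal with x
  simp [Complex.real_smul]

theorem integral_abs_pow_mul_exp_neg_mul_sq {b : ℝ} (hb : 0 < b) (n : ℕ) :
    ∫ x, |x| ^ n * rexp (-b * x ^ 2) = b ^ (-((n : ℝ) + 1) / 2) * Real.Gamma ((n + 1) / 2) := by
  have hn : (-1 : ℝ) < n := by linarith [n.cast_nonneg (α := ℝ)]
  calc ∫ x, |x| ^ n * rexp (-b * x ^ 2)
      = 2 * ∫ x in Set.Ioi 0, x ^ n * rexp (-b * x ^ 2) := by
        rw [← integral_comp_abs (f := fun x ↦ x ^ n * rexp (-b * x ^ 2))]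
        simp only [sq_abs]
    _ = 2 * ∫ x in Set.Ioi 0, x ^ (n : ℝ) * rexp (-b * x ^ (2 : ℝ)) := by
        simp only [rpow_natCast, rpow_two]
    _ = _ := by rw [integral_rpow_mul_exp_neg_mul_rpow two_pos hn hb]; ring

theorem ofReal_exp_neg_sq_div_two_eq_smul_fourier :
    (fun t : ℝ ↦ (rexp (-(t ^ 2) / 2) : ℂ)) =
      (√(2 * π) : ℂ) • 𝓕 (fun x : ℝ ↦ cexp (-((2 * π ^ 2 : ℝ) : ℂ) * (x : ℂ) ^ 2)) := by
  have h2π : (0 : ℝ) < 2 * π := by positivity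
  have h := fourier_gaussian_pi (b := ((2 * π : ℝ) : ℂ)) (by simpa using h2π)
  have hsqrt : ((2 * π : ℝ) : ℂ) ^ (1 / 2 : ℂ) = (√(2 * π) : ℂ) := by
    rw [sqrt_eq_rpow, ofReal_cpow h2π.le]; norm_num
  ext t
  rw [Pi.smul_apply, show -((2 * π ^ 2 : ℝ) : ℂ) = -π * ((2 * π : ℝ) : ℂ) by push_cast; ring, h,
    hsqrt, smul_eq_mul, ← mul_assoc, mul_one_div_cancel (mod_cast (sqrt_pos.2 h2π).ne'), one_mul,
    ofReal_exp]
  congr 1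
  push_cast
  field_simp

theorem sqrt_two_pi_mul_two_pi_pow_mul_rpow (n : ℕ) :
    √(2 * π) * ((2 * π) ^ n * (2 * π ^ 2) ^ (-((n : ℝ) + 1) / 2)) = 2 ^ ((n : ℝ) / 2) / √π := by
  have h2 : (2 : ℝ) = √2 ^ 2 := (sq_sqrt zero_le_two).symm
  have hπ : π = √π ^ 2 := (sq_sqrt pi_pos.le).symm
  have hpos : 0 < √2 * √π ^ 2 := by positivity
  have e1 : (2 * π ^ 2 : ℝ) ^ (-((n : ℝ) + 1) / 2) = ((√2 * √π ^ 2) ^ (n + 1))⁻¹ := by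
    rw [show (2 * π ^ 2 : ℝ) = (√2 * √π ^ 2) ^ (2 : ℝ) by rw [rpow_two]; nth_rw 1 [h2, hπ]; ring,
      ← rpow_mul hpos.le,
      show (2 : ℝ) * (-((n : ℝ) + 1) / 2) = -((n + 1 : ℕ) : ℝ) by push_cast; ring,
      rpow_neg hpos.le, rpow_natCast]
  have e2 : (2 : ℝ) ^ ((n : ℝ) / 2) = √2 ^ n := by
    rw [sqrt_eq_rpow, ← rpow_natCast, ← rpow_mul zero_le_two]; ring_nf
  rw [e1, e2, sqrt_mul zero_le_two]
  nth_rw 2 [h2]; nth_rw 2 [hπ]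
  field_simp
  ring

theorem abs_iteratedDeriv_exp_neg_sq_div_two_le (n : ℕ) (y : ℝ) :
    |iteratedDeriv n (fun x ↦ rexp (-(x ^ 2) / 2)) y| ≤
      2 ^ ((n : ℝ) / 2) / √π * Real.Gamma ((n + 1) / 2) := by
  have hb : (0 : ℝ) < 2 * π ^ 2 := by positivity
  rw [← norm_iteratedDeriv_ofReal_comp (by fun_prop), ofReal_exp_neg_sq_div_two_eq_smul_fourier,
    iteratedDeriv_const_smul_field, norm_smul, norm_real, norm_of_nonneg (sqrt_nonneg _)]
  set g : ℝ → ℂ := fun x ↦ cexp (-((2 * π ^ 2 : ℝ) : ℂ) * (x : ℂ) ^ 2)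
  have hmoment : ∫ x, |x| ^ n * ‖g x‖ =
      (2 * π ^ 2) ^ (-((n : ℝ) + 1) / 2) * Real.Gamma ((n + 1) / 2) := by
    simp_rw [g, norm_cexp_neg_mul_sq, ofReal_re]
    exact integral_abs_pow_mul_exp_neg_mul_sq hb n
  calc √(2 * π) * ‖iteratedDeriv n (𝓕 g) y‖
      ≤ √(2 * π) * ((2 * π) ^ n * ∫ x, |x| ^ n * ‖g x‖) := by
        gcongr
        exact norm_iteratedDeriv_fourier_le (fun k _ ↦ integrable_pow_smul_cexp_neg_mul_sq hb k) y
    _ = 2 ^ ((n : ℝ) / 2) / √π * Real.Gamma ((n + 1) / 2) := by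
        rw [hmoment, ← sqrt_two_pi_mul_two_pi_pow_mul_rpow n]
        ring

theorem hermiteH_mul_exp_neg_sq_div_two (n : ℕ) (x : ℝ) :
    hermiteH n x * rexp (-(x ^ 2) / 2) =
      (-1) ^ n / n.factorial * iteratedDeriv n (fun y ↦ rexp (-(y ^ 2) / 2)) x := by
  rw [hermiteH, mul_right_comm, mul_assoc ((-1 : ℝ) ^ n / n.factorial), ← Real.exp_add, neg_div,
    add_neg_cancel, Real.exp_zero, mul_one]

theorem one_div_sqrt_pi_le_two_div_pi : 1 / √π ≤ 2 / π := by
  rw [div_le_div_iff₀ (sqrt_pos.2 pi_pos) pi_pos, one_mul]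
  nlinarith [sq_sqrt pi_pos.le, sqrt_nonneg π, pi_le_four]

theorem stmt1 (y : ℝ) (n : ℕ) :
    |hermiteH n y * Real.exp (-(y ^ 2) / 2)| ≤
      (2 : ℝ) ^ ((n : ℝ) / 2) * (2 / (n.factorial * π)) * Real.Gamma ((n + 1) / 2) := by
  have hΓ : 0 ≤ Real.Gamma ((n + 1) / 2) := (Gamma_pos_of_pos (by positivity)).le
  rw [hermiteH_mul_exp_neg_sq_div_two, abs_mul, abs_div, abs_pow, abs_neg, abs_one, one_pow,
    Nat.abs_cast]
  calc 1 / n.factorial * |iteratedDeriv n (fun y ↦ rexp (-(y ^ 2) / 2)) y|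
      ≤ 1 / n.factorial * (2 ^ ((n : ℝ) / 2) / √π * Real.Gamma ((n + 1) / 2)) := by
        gcongr
        exact abs_iteratedDeriv_exp_neg_sq_div_two_le n y
    _ = 2 ^ ((n : ℝ) / 2) * (1 / √π) * Real.Gamma ((n + 1) / 2) / n.factorial := by ring
    _ ≤ 2 ^ ((n : ℝ) / 2) * (2 / π) * Real.Gamma ((n + 1) / 2) / n.factorial := by
        gcongr 2 ^ _ * ?_ * _ / _
        exact one_div_sqrt_pi_le_two_div_pi
    _ = _ := by ring
end

section
/- For every α < -1/2 and every x ∈ ℝ, the series ∑_{m≥0} (1+m)^α m! ∫_0^1 ∫_0^1 (p_{uv}(x) H_m(x/√(uv)))^2 uv du dv converges. -/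
open Real MeasureTheory intervalIntegral

/-- Centered Gaussian density of variance `s`. -/
noncomputable def gaussDensity (s x : ℝ) : ℝ := (2 * π * s) ^ (-(1 : ℝ) / 2) * Real.exp (-(x ^ 2) / (2 * s))

/-!
With `He_m = Polynomial.hermite m`, one has `H_m = He_m / m!`, so at `s = uv` the integrand is
`ψ_m(x/√s) / (2π m!²)` with `ψ_m(y) = He_m(y)² e^{-y²}`. Substituting `t = uv` in the inner
integral bounds the double integral of any nonnegative `g(uv)` by `2 ∫₀¹ g(s) s^{-1/2} ds`.
For `x ≠ 0` the substitution `y = x/√s` bounds that by `(2/|x|) ∫ ψ_m`, and integrating by parts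
against `e^{-y²}` gives `∫ ψ_m = √π m! C(2m, m) / 4^m`. For `x = 0` that integral is `2 ψ_m(0)`, and
`He_m(0)²/m!` is `C(m, m/2) / 2^m` or `0`. Since `C(2k, k) / 4^k ≤ (2k+1)^{-1/2}`, in both cases
`m!` times the double integral is `O(m^{-1/2})`, and the series is dominated by
`∑ (1+m)^{α-1/2}`.
-/

open Polynomial Set Nat

lemma derivative_hermite_succ (n : ℕ) : derivative (hermite (n + 1)) = (n + 1) • hermite n := by
  induction n with
  | zero => simp
  | succ n ih =>
    rw [hermite_succ (n + 1), derivative_sub, derivative_mul, derivative_X, one_mul, ih,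
      derivative_smul, hermite_succ n]
    simp only [nsmul_eq_mul]
    push_cast
    ring

section GaussPairing

lemma integrable_aeval_mul_exp_neg_sq (P : ℤ[X]) :
    Integrable fun y : ℝ => aeval y P * exp (-y ^ 2) := by
  induction P using Polynomial.induction_on' with
  | add P Q hP hQ =>
    simp only [map_add, add_mul]
    exact hP.add hQ
  | monomial n a =>
    have h := integrable_rpow_mul_exp_neg_mul_sq one_pos (s := n)
      (by linarith [n.cast_nonneg (α := ℝ)])
    simpa [mul_assoc] using h.const_mul (a : ℝ)

noncomputable def gaussPairing : ℤ[X] →+ ℝ where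
  toFun P := ∫ y, aeval y P * exp (-y ^ 2)
  map_zero' := by simp
  map_add' P Q := by
    simp only [map_add, add_mul]
    exact integral_add (integrable_aeval_mul_exp_neg_sq P) (integrable_aeval_mul_exp_neg_sq Q)

lemma gaussPairing_apply (P : ℤ[X]) : gaussPairing P = ∫ y, aeval y P * exp (-y ^ 2) := rfl

lemma gaussPairing_one : gaussPairing 1 = √π := by
  simpa [gaussPairing_apply] using integral_gaussian 1

lemma gaussPairing_derivative (P : ℤ[X]) :
    gaussPairing (derivative P) = 2 * gaussPairing (X * P) := by
  have hderiv (y : ℝ) : HasDerivAt (fun y => aeval y P * exp (-y ^ 2))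
      (aeval y (derivative P - (X * P + X * P)) * exp (-y ^ 2)) y := by
    have hexp : HasDerivAt (fun y : ℝ => exp (-y ^ 2)) (exp (-y ^ 2) * -(2 * y)) y := by
      simpa using (hasDerivAt_pow 2 y).neg.exp
    refine ((P.hasDerivAt_aeval y).mul hexp).congr_deriv ?_
    simp only [map_sub, map_add, map_mul, aeval_X]
    ring
  have h := integral_eq_zero_of_hasDerivAt_of_integrable hderiv
    (integrable_aeval_mul_exp_neg_sq _) (integrable_aeval_mul_exp_neg_sq P)
  rw [← gaussPairing_apply, map_sub, map_add] at h
  linarith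

lemma gaussPairing_hermite_succ_sq (m : ℕ) :
    gaussPairing (hermite (m + 1) ^ 2) = (2 * m + 1) / 2 * gaussPairing (hermite m ^ 2) := by
  set A := hermite (m + 1)
  set B := hermite m
  have hA : A = X * B - derivative B := hermite_succ m
  have hA' : derivative A = (m + 1) • B := derivative_hermite_succ m
  -- the Hermite equation `B'' = X B' - m B`
  have hB'' : derivative (derivative B) = B + X * derivative B - (m + 1) • B := by
    have h := congrArg derivative hA
    rw [hA', derivative_sub, derivative_mul, derivative_X, one_mul] at h
    rw [h]
    abel
  have ibp₁ := gaussPairing_derivative (A * B)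
  have ibp₂ := gaussPairing_derivative (B * derivative B)
  rw [derivative_mul, hA', smul_mul_assoc] at ibp₁
  rw [derivative_mul, hB''] at ibp₂
  have e₁ : A ^ 2 = X * (A * B) - A * derivative B := by linear_combination A * hA
  have e₂ : A * derivative B = X * (B * derivative B) - derivative B * derivative B := by
    linear_combination derivative B * hA
  have e₃ : B * (B + X * derivative B - (m + 1) • B)
      = B ^ 2 + X * (B * derivative B) - (m + 1) • B ^ 2 := by
    simp only [nsmul_eq_mul]
    ring
  rw [e₃] at ibp₂
  rw [e₁]
  simp only [map_add, map_sub, map_nsmul, ← sq] at *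
  simp only [nsmul_eq_mul] at *
  rw [e₂, map_sub] at ibp₁ ⊢
  push_cast at *
  linarith

end GaussPairing

section CentralBinom

lemma centralBinom_succ_div_four_pow (n : ℕ) : (centralBinom (n + 1) : ℝ) / 4 ^ (n + 1)
    = (2 * n + 1) / (2 * n + 2) * (centralBinom n / 4 ^ n) := by
  have h := congrArg (fun k : ℕ => (k : ℝ)) (succ_mul_centralBinom_succ n)
  push_cast at h
  field_simp
  rw [pow_succ]
  linear_combination (2 * 4 ^ n : ℝ) * h

lemma centralBinom_div_four_pow_le (n : ℕ) : (centralBinom n : ℝ) / 4 ^ n ≤ 1 / √(2 * n + 1) := by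
  induction n with
  | zero => simp
  | succ n ih =>
    -- `(2n+1)(2n+3) = (2n+2)² - 1`
    have hprod : √(2 * n + 1 : ℝ) * √(2 * ↑(n + 1) + 1) ≤ 2 * n + 2 := by
      rw [← Real.sqrt_mul (by positivity), Real.sqrt_le_left (by positivity)]
      push_cast
      nlinarith
    have hsqrt : 0 < √(2 * ↑(n + 1) + 1 : ℝ) := Real.sqrt_pos.mpr (by positivity)
    calc (centralBinom (n + 1) : ℝ) / 4 ^ (n + 1)
        ≤ (2 * n + 1) / (2 * n + 2) * (1 / √(2 * n + 1)) := by
          rw [centralBinom_succ_div_four_pow]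
          gcongr
      _ = √(2 * n + 1) / (2 * n + 2) := by
          field_simp
          rw [Real.sq_sqrt (by positivity)]
      _ ≤ 1 / √(2 * ↑(n + 1) + 1) := by
          rw [div_le_div_iff₀ (by positivity) hsqrt]
          linarith

end CentralBinom

section HermiteAtZero

lemma aeval_zero_hermite_add_two (n : ℕ) :
    aeval (0 : ℝ) (hermite (n + 2)) = -(n + 1) * aeval (0 : ℝ) (hermite n) := by
  rw [hermite_succ (n + 1), derivative_hermite_succ, map_sub, map_mul, aeval_X, zero_mul, zero_sub,
    map_nsmul, nsmul_eq_mul]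
  push_cast
  ring

lemma aeval_zero_hermite_odd (k : ℕ) : aeval (0 : ℝ) (hermite (2 * k + 1)) = 0 := by
  induction k with
  | zero => simp
  | succ k ih =>
    rw [show 2 * (k + 1) + 1 = 2 * k + 1 + 2 by ring, aeval_zero_hermite_add_two, ih, mul_zero]

lemma aeval_zero_hermite_even_sq_div_factorial (k : ℕ) :
    aeval (0 : ℝ) (hermite (2 * k)) ^ 2 / (2 * k)! = centralBinom k / 4 ^ k := by
  induction k with
  | zero => simp
  | succ k ih =>
    rw [show 2 * (k + 1) = 2 * k + 2 by ring, aeval_zero_hermite_add_two, factorial_succ,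
      factorial_succ, centralBinom_succ_div_four_pow, ← ih]
    push_cast
    field_simp
    ring

lemma aeval_zero_hermite_sq_div_factorial_le (m : ℕ) :
    aeval (0 : ℝ) (hermite m) ^ 2 / m ! ≤ 1 / √(m + 1) := by
  obtain ⟨k, rfl | rfl⟩ := m.even_or_odd'
  · rw [aeval_zero_hermite_even_sq_div_factorial]
    exact_mod_cast centralBinom_div_four_pow_le k
  · rw [aeval_zero_hermite_odd]
    simp

end HermiteAtZero

section HermiteSqWeight

lemma hermiteH_eq_aeval (m : ℕ) (y : ℝ) : hermiteH m y = aeval y (hermite m) / m ! := by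
  have hgauss : (fun y : ℝ => exp (-(y ^ 2) / 2)) = fun y => exp (-(y ^ 2 / 2)) := by
    simp only [neg_div]
  have hexp : exp (y ^ 2 / 2) * exp (-(y ^ 2 / 2)) = 1 := by
    rw [← exp_add]
    simp
  have hsign : ((-1 : ℝ) ^ m) ^ 2 = 1 := by rw [← pow_mul, (even_two.mul_left m).neg_one_pow]
  rw [hermiteH, hgauss, iteratedDeriv_eq_iterate, deriv_gaussian_eq_hermite_mul_gaussian]
  field_simp
  linear_combination aeval y (hermite m) * ((-1) ^ m) ^ 2 * hexp + aeval y (hermite m) * hsign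

noncomputable def hermiteSqWeight (m : ℕ) (y : ℝ) : ℝ := aeval y (hermite m) ^ 2 * exp (-y ^ 2)

lemma hermiteSqWeight_eq (m : ℕ) :
    hermiteSqWeight m = fun y => aeval y (hermite m ^ 2) * exp (-y ^ 2) := by
  ext y
  rw [hermiteSqWeight, map_pow]

lemma hermiteSqWeight_nonneg (m : ℕ) (y : ℝ) : 0 ≤ hermiteSqWeight m y := by
  unfold hermiteSqWeight
  positivity

lemma continuous_hermiteSqWeight (m : ℕ) : Continuous (hermiteSqWeight m) := by
  unfold hermiteSqWeight
  fun_prop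

lemma integrable_hermiteSqWeight (m : ℕ) : Integrable (hermiteSqWeight m) := by
  rw [hermiteSqWeight_eq]
  exact integrable_aeval_mul_exp_neg_sq _

lemma integral_hermiteSqWeight (m : ℕ) :
    ∫ y, hermiteSqWeight m y = √π * m ! * centralBinom m / 4 ^ m := by
  rw [hermiteSqWeight_eq, ← gaussPairing_apply]
  induction m with
  | zero => simp [gaussPairing_one]
  | succ m ih =>
    rw [gaussPairing_hermite_succ_sq, ih, mul_div_assoc _ (centralBinom (m + 1) : ℝ),
      centralBinom_succ_div_four_pow, factorial_succ]
    push_cast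
    field_simp

end HermiteSqWeight

section InverseSqrtWeight

lemma integrableOn_inv_sqrt : IntegrableOn (fun s : ℝ => (√s)⁻¹) (Ioc 0 1) := by
  have h := intervalIntegrable_rpow' (a := 0) (b := 1) (r := -(1 / 2)) (by norm_num)
  rw [intervalIntegrable_iff_integrableOn_Ioc_of_le zero_le_one] at h
  refine h.congr_fun (fun s hs => ?_) measurableSet_Ioc
  dsimp only
  rw [rpow_neg hs.1.le, sqrt_eq_rpow]

lemma integral_inv_sqrt : ∫ s in Ioc (0 : ℝ) 1, (√s)⁻¹ = 2 := by
  have h : ∫ s in (0 : ℝ)..1, s ^ (-(1 / 2) : ℝ) = 2 := by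
    rw [_root_.integral_rpow (Or.inl (by norm_num))]
    norm_num
  rw [integral_of_le zero_le_one] at h
  rw [← h]
  refine setIntegral_congr_fun measurableSet_Ioc (fun s hs => ?_)
  rw [rpow_neg hs.1.le, sqrt_eq_rpow]

lemma integral_integral_comp_mul_le {g : ℝ → ℝ} (hg : ∀ s ∈ Icc (0 : ℝ) 1, 0 ≤ g s)
    (hint : IntegrableOn (fun s => g s / √s) (Ioc 0 1)) :
    ∫ u in (0 : ℝ)..1, ∫ v in (0 : ℝ)..1, g (u * v) ≤ 2 * ∫ s in Ioc 0 1, g s / √s := by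
  set K := ∫ s in Ioc 0 1, g s / √s
  have inner (u : ℝ) (hu : u ∈ Ioc (0 : ℝ) 1) : ∫ v in (0 : ℝ)..1, g (u * v) ≤ K * (√u)⁻¹ := by
    have hsub : Ioc 0 u ⊆ Ioc 0 1 := Ioc_subset_Ioc_right hu.2
    have hu0 : 0 < √u := sqrt_pos.mpr hu.1
    have hle : ∫ t in Ioc 0 u, g t ≤ √u * ∫ t in Ioc 0 u, g t / √t := by
      rw [← MeasureTheory.integral_const_mul]
      refine integral_mono_of_nonneg ?_ ((hint.mono_set hsub).const_mul _) ?_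
      · filter_upwards [ae_restrict_mem measurableSet_Ioc] with t ht
        exact hg t (Ioc_subset_Icc_self (hsub ht))
      · filter_upwards [ae_restrict_mem measurableSet_Ioc] with t ht
        have ht0 : 0 < √t := sqrt_pos.mpr ht.1
        rw [mul_div_assoc', le_div_iff₀ ht0, mul_comm (g t)]
        exact mul_le_mul_of_nonneg_right (sqrt_le_sqrt ht.2) (hg t (Ioc_subset_Icc_self (hsub ht)))
    have hmono : ∫ t in Ioc 0 u, g t / √t ≤ K :=
      setIntegral_mono_set hint
        (by filter_upwards [ae_restrict_mem measurableSet_Ioc] with t ht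
            exact div_nonneg (hg t (Ioc_subset_Icc_self ht)) (sqrt_nonneg t))
        hsub.eventuallyLE
    rw [integral_comp_mul_left _ hu.1.ne', mul_zero, mul_one, smul_eq_mul, integral_of_le hu.1.le]
    calc u⁻¹ * ∫ t in Ioc 0 u, g t ≤ u⁻¹ * (√u * K) :=
          mul_le_mul_of_nonneg_left (hle.trans (mul_le_mul_of_nonneg_left hmono hu0.le))
            (inv_nonneg.mpr hu.1.le)
      _ = K * (√u)⁻¹ := by
          have := sq_sqrt hu.1.le
          field_simp
          rw [this, mul_div_cancel_left₀ _ hu.1.ne']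
  calc ∫ u in (0 : ℝ)..1, ∫ v in (0 : ℝ)..1, g (u * v)
      = ∫ u in Ioc 0 1, ∫ v in (0 : ℝ)..1, g (u * v) := integral_of_le zero_le_one
    _ ≤ ∫ u in Ioc 0 1, K * (√u)⁻¹ := by
        refine integral_mono_of_nonneg ?_ (integrableOn_inv_sqrt.const_mul K) ?_
        · filter_upwards [ae_restrict_mem measurableSet_Ioc] with u hu
          refine integral_nonneg zero_le_one fun v hv => hg _ ?_
          exact ⟨mul_nonneg hu.1.le hv.1, mul_le_one₀ hu.2 hv.1 hv.2⟩
        · filter_upwards [ae_restrict_mem measurableSet_Ioc] with u hu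
          exact inner u hu
    _ = 2 * K := by rw [MeasureTheory.integral_const_mul, integral_inv_sqrt, mul_comm]

lemma hasDerivAt_div_sqrt (x : ℝ) {s : ℝ} (hs : 0 < s) :
    HasDerivAt (fun s => x / √s) (-x / (2 * s * √s)) s := by
  have h := (hasDerivAt_const s x).div (hasDerivAt_sqrt hs.ne') (sqrt_ne_zero'.mpr hs)
  refine h.congr_deriv ?_
  have := sq_sqrt hs.le
  field_simp
  rw [this]
  ring

lemma injOn_div_sqrt {x : ℝ} (hx : x ≠ 0) : InjOn (fun s => x / √s) (Ioi 0) := by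
  intro a ha b hb hab
  have ha' : √a ≠ 0 := (sqrt_pos.mpr ha).ne'
  have hb' : √b ≠ 0 := (sqrt_pos.mpr hb).ne'
  have hab' : √a = √b := by
    simp only [div_eq_div_iff ha' hb'] at hab
    exact (mul_left_cancel₀ hx hab).symm
  rwa [sqrt_inj (le_of_lt ha) (le_of_lt hb)] at hab'

lemma div_sqrt_le_abs_deriv_mul {x s : ℝ} (hx : x ≠ 0) (hs : s ∈ Ioc (0 : ℝ) 1) {c : ℝ}
    (hc : 0 ≤ c) : c / √s ≤ 2 / |x| * (|-x / (2 * s * √s)| * c) := by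
  have hs0 : 0 < s := hs.1
  rw [abs_div, abs_neg, abs_of_pos (by positivity : 0 < 2 * s * √s)]
  calc c / √s ≤ c / (s * √s) :=
        div_le_div_of_nonneg_left hc (by positivity) (mul_le_of_le_one_left (sqrt_nonneg s) hs.2)
    _ = 2 / |x| * (|x| / (2 * s * √s) * c) := by field_simp

lemma integrableOn_comp_div_sqrt_div_sqrt {w : ℝ → ℝ} (hwc : Continuous w) (hwi : Integrable w)
    (hw : ∀ y, 0 ≤ w y) {x : ℝ} (hx : x ≠ 0) :
    IntegrableOn (fun s => w (x / √s) / √s) (Ioc 0 1) := by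
  have hderiv : ∀ s ∈ Ioo (0 : ℝ) 1,
      HasDerivWithinAt (fun s => x / √s) (-x / (2 * s * √s)) (Ioo 0 1) s :=
    fun s hs => (hasDerivAt_div_sqrt x hs.1).hasDerivWithinAt
  have hJ := (integrableOn_image_iff_integrableOn_abs_deriv_smul measurableSet_Ioo hderiv
    ((injOn_div_sqrt hx).mono Ioo_subset_Ioi_self) w).mp hwi.integrableOn
  rw [integrableOn_Ioc_iff_integrableOn_Ioo]
  refine Integrable.mono' (hJ.const_mul (2 / |x|)) ?_ ?_
  · refine ContinuousOn.aestronglyMeasurable ?_ measurableSet_Ioo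
    have hsqrt : ContinuousOn (fun s : ℝ => √s) (Ioo 0 1) := continuous_sqrt.continuousOn
    have hne : ∀ s ∈ Ioo (0 : ℝ) 1, √s ≠ 0 := fun s hs => (sqrt_pos.mpr hs.1).ne'
    exact (hwc.comp_continuousOn (continuousOn_const.div hsqrt hne)).div hsqrt hne
  · filter_upwards [ae_restrict_mem measurableSet_Ioo] with s hs
    rw [norm_of_nonneg (div_nonneg (hw _) (sqrt_nonneg s))]
    exact div_sqrt_le_abs_deriv_mul hx (Ioo_subset_Ioc_self hs) (hw _)

lemma setIntegral_comp_div_sqrt_div_sqrt_le {w : ℝ → ℝ} (hwc : Continuous w) (hwi : Integrable w)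
    (hw : ∀ y, 0 ≤ w y) {x : ℝ} (hx : x ≠ 0) :
    ∫ s in Ioc 0 1, w (x / √s) / √s ≤ 2 / |x| * ∫ y, w y := by
  have hderiv : ∀ s ∈ Ioo (0 : ℝ) 1,
      HasDerivWithinAt (fun s => x / √s) (-x / (2 * s * √s)) (Ioo 0 1) s :=
    fun s hs => (hasDerivAt_div_sqrt x hs.1).hasDerivWithinAt
  have hinj := (injOn_div_sqrt hx).mono (Ioo_subset_Ioi_self : Ioo (0 : ℝ) 1 ⊆ Ioi 0)
  have hJ := (integrableOn_image_iff_integrableOn_abs_deriv_smul measurableSet_Ioo hderiv hinj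
    w).mp hwi.integrableOn
  rw [integral_Ioc_eq_integral_Ioo]
  calc ∫ s in Ioo 0 1, w (x / √s) / √s
      ≤ ∫ s in Ioo 0 1, 2 / |x| * (|-x / (2 * s * √s)| * w (x / √s)) :=
        setIntegral_mono_on
          ((integrableOn_comp_div_sqrt_div_sqrt hwc hwi hw hx).mono_set Ioo_subset_Ioc_self)
          (hJ.const_mul _) measurableSet_Ioo
          fun s hs => div_sqrt_le_abs_deriv_mul hx (Ioo_subset_Ioc_self hs) (hw _)
    _ = 2 / |x| * ∫ y in (fun s => x / √s) '' Ioo 0 1, w y := by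
        rw [MeasureTheory.integral_const_mul,
          integral_image_eq_integral_abs_deriv_smul measurableSet_Ioo hderiv hinj]
        rfl
    _ ≤ 2 / |x| * ∫ y, w y :=
        mul_le_mul_of_nonneg_left (setIntegral_le_integral hwi (ae_of_all _ hw)) (by positivity)

end InverseSqrtWeight

section HermiteKernel

noncomputable def hermiteKernel (m : ℕ) (x s : ℝ) : ℝ :=
  (gaussDensity s x * hermiteH m (x / √s)) ^ 2 * s

lemma hermiteKernel_eq (m : ℕ) (x : ℝ) {s : ℝ} (hs : 0 < s) :
    hermiteKernel m x s = hermiteSqWeight m (x / √s) / (2 * π * m ! ^ 2) := by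
  have hdens : ((2 * π * s) ^ (-(1 : ℝ) / 2)) ^ 2 = (2 * π * s)⁻¹ := by
    rw [← rpow_natCast, ← rpow_mul (by positivity)]
    norm_num [rpow_neg_one]
  have hexp : exp (-(x ^ 2) / (2 * s)) ^ 2 = exp (-(x / √s) ^ 2) := by
    rw [← exp_nat_mul, div_pow, sq_sqrt hs.le]
    congr 1
    field_simp
    push_cast
    ring
  rw [hermiteKernel, gaussDensity, hermiteSqWeight, hermiteH_eq_aeval, mul_pow, mul_pow, hdens,
    hexp]
  field_simp

lemma hermiteKernel_nonneg (m : ℕ) (x : ℝ) {s : ℝ} (hs : 0 ≤ s) : 0 ≤ hermiteKernel m x s := by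
  unfold hermiteKernel
  positivity

lemma factorial_mul_integral_integral_hermiteKernel_le (m : ℕ) (x : ℝ)
    (hint : IntegrableOn (fun s => hermiteSqWeight m (x / √s) / √s) (Ioc 0 1)) :
    m ! * ∫ u in (0 : ℝ)..1, ∫ v in (0 : ℝ)..1, hermiteKernel m x (u * v)
      ≤ (∫ s in Ioc 0 1, hermiteSqWeight m (x / √s) / √s) / (π * m !) := by
  set c : ℝ := (2 * π * m ! ^ 2)⁻¹
  have heq : EqOn (fun s => hermiteKernel m x s / √s)
      (fun s => c * (hermiteSqWeight m (x / √s) / √s)) (Ioc 0 1) := fun s hs => by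
    simp only [hermiteKernel_eq m x hs.1, c]
    ring
  have h := integral_integral_comp_mul_le (fun s hs => hermiteKernel_nonneg m x hs.1)
    (IntegrableOn.congr_fun (hint.const_mul c) heq.symm measurableSet_Ioc)
  rw [setIntegral_congr_fun measurableSet_Ioc heq, MeasureTheory.integral_const_mul] at h
  calc (m ! : ℝ) * ∫ u in (0 : ℝ)..1, ∫ v in (0 : ℝ)..1, hermiteKernel m x (u * v)
      ≤ m ! * (2 * (c * ∫ s in Ioc 0 1, hermiteSqWeight m (x / √s) / √s)) := by gcongr
    _ = (∫ s in Ioc 0 1, hermiteSqWeight m (x / √s) / √s) / (π * m !) := by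
        simp only [c]
        field_simp

lemma factorial_mul_integral_integral_hermiteKernel_zero_le (m : ℕ) :
    m ! * ∫ u in (0 : ℝ)..1, ∫ v in (0 : ℝ)..1, hermiteKernel m 0 (u * v) ≤ 2 / π / √(m + 1) := by
  have hconst : (fun s => hermiteSqWeight m (0 / √s) / √s)
      = fun s => hermiteSqWeight m 0 * (√s)⁻¹ := by
    funext s
    rw [zero_div, div_eq_mul_inv]
  have hint : IntegrableOn (fun s => hermiteSqWeight m (0 / √s) / √s) (Ioc 0 1) := by
    rw [hconst]
    exact integrableOn_inv_sqrt.const_mul _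
  refine (factorial_mul_integral_integral_hermiteKernel_le m 0 hint).trans ?_
  rw [hconst, MeasureTheory.integral_const_mul, integral_inv_sqrt]
  calc hermiteSqWeight m 0 * 2 / (π * m !)
      = 2 / π * (aeval (0 : ℝ) (hermite m) ^ 2 / m !) := by
        simp only [hermiteSqWeight, neg_zero, zero_pow two_ne_zero, exp_zero, mul_one]
        field_simp
    _ ≤ 2 / π * (1 / √(m + 1)) := by
        exact mul_le_mul_of_nonneg_left (aeval_zero_hermite_sq_div_factorial_le m) (by positivity)
    _ = 2 / π / √(m + 1) := by ring

lemma factorial_mul_integral_integral_hermiteKernel_le_of_ne_zero {x : ℝ} (hx : x ≠ 0) (m : ℕ) :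
    m ! * ∫ u in (0 : ℝ)..1, ∫ v in (0 : ℝ)..1, hermiteKernel m x (u * v)
      ≤ 2 / (√π * |x|) / √(m + 1) := by
  refine (factorial_mul_integral_integral_hermiteKernel_le m x
    (integrableOn_comp_div_sqrt_div_sqrt (continuous_hermiteSqWeight m)
      (integrable_hermiteSqWeight m) (hermiteSqWeight_nonneg m) hx)).trans ?_
  calc (∫ s in Ioc 0 1, hermiteSqWeight m (x / √s) / √s) / (π * m !)
      ≤ 2 / |x| * (∫ y, hermiteSqWeight m y) / (π * m !) := by
        gcongr
        exact setIntegral_comp_div_sqrt_div_sqrt_le (continuous_hermiteSqWeight m)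
          (integrable_hermiteSqWeight m) (hermiteSqWeight_nonneg m) hx
    _ = 2 / (√π * |x|) * (centralBinom m / 4 ^ m) := by
        rw [integral_hermiteSqWeight]
        have := sq_sqrt pi_pos.le
        field_simp
        rw [this]
        ring
    _ ≤ 2 / (√π * |x|) * (1 / √(2 * m + 1)) := by
        exact mul_le_mul_of_nonneg_left (centralBinom_div_four_pow_le m) (by positivity)
    _ ≤ 2 / (√π * |x|) / √(m + 1) := by
        rw [mul_one_div]
        gcongr
        linarith [m.cast_nonneg (α := ℝ)]

end HermiteKernel

lemma summable_rpow_div_sqrt {α : ℝ} (hα : α < -1 / 2) :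
    Summable fun m : ℕ => ((m : ℝ) + 1) ^ α / √(m + 1) := by
  refine ((summable_nat_add_iff 1).mpr (summable_nat_rpow.mpr (by linarith : α - 1 / 2 < -1))).congr
    fun m => ?_
  have hm : (0 : ℝ) < m + 1 := by positivity
  push_cast
  rw [rpow_sub hm, sqrt_eq_rpow]

theorem stmt6 (α : ℝ) (hα : α < -1/2) (x : ℝ) :
    Summable (fun m : ℕ => (1 + (m : ℝ)) ^ α * (m.factorial : ℝ) *
      ∫ u in (0:ℝ)..1, ∫ v in (0:ℝ)..1,
        (gaussDensity (u * v) x * hermiteH m (x / Real.sqrt (u * v))) ^ 2 * (u * v)) := by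
  obtain ⟨C, hC⟩ : ∃ C, ∀ m : ℕ,
      m ! * ∫ u in (0 : ℝ)..1, ∫ v in (0 : ℝ)..1, hermiteKernel m x (u * v) ≤ C / √(m + 1) := by
    rcases eq_or_ne x 0 with rfl | hx
    · exact ⟨_, factorial_mul_integral_integral_hermiteKernel_zero_le⟩
    · exact ⟨_, factorial_mul_integral_integral_hermiteKernel_le_of_ne_zero hx⟩
  have hnonneg (m : ℕ) : 0 ≤ ∫ u in (0 : ℝ)..1, ∫ v in (0 : ℝ)..1, hermiteKernel m x (u * v) :=
    integral_nonneg zero_le_one fun u hu => integral_nonneg zero_le_one fun v hv =>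
      hermiteKernel_nonneg m x (mul_nonneg hu.1 hv.1)
  refine ((summable_rpow_div_sqrt hα).mul_left C).of_nonneg_of_le (fun m => ?_) (fun m => ?_)
  · exact mul_nonneg (by positivity) (hnonneg m)
  · calc (1 + (m : ℝ)) ^ α * m ! * ∫ u in (0 : ℝ)..1, ∫ v in (0 : ℝ)..1, hermiteKernel m x (u * v)
        ≤ (1 + (m : ℝ)) ^ α * (C / √(m + 1)) := by
          rw [mul_assoc]
          exact mul_le_mul_of_nonneg_left (hC m) (by positivity)
      _ = C * (((m : ℝ) + 1) ^ α / √(m + 1)) := by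
          rw [add_comm 1 (m : ℝ)]
          ring
end
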